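/- arXiv:2408.08825 — 3 statements merged into one kernel-verified Lean document; each statement's English description precedes it below -/
import Mathlib

section
/- Let T>0, c₁>0 and α∈(0,1). Then for all sufficiently large ℓ>0 there exists τ=τ(c₁,ℓ,α)∈(0,T) such that for all t∈[τ,T), ∫ₜ^T |t−s|^{−α} (1/(T−s))^{2(1−α)} e^{−ℓ/(T−s)} ds ≤ c₁ e^{−ℓ/(T−t)}. -/
/-!
Write `δ = T - t`, `u = s - t`, `v = T - s` and `β = 2 (1 - α)`. Since
`ℓ / v = ℓ / δ + ℓ u / (v δ)`, the integral is `e^{-ℓ/δ}` times the integral of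
`u^{-α} v^{-β} e^{-ℓ u / (v δ)}` over `0 < u < δ`. Where `u ≤ δ/2` we have `v ≥ δ/2` and
`ℓ u / (v δ) ≥ ℓ u / δ²`, so this part is at most
`(δ/2)^{-β} Γ(1-α) (δ²/ℓ)^{1-α} = Γ(1-α) (4/ℓ)^{1-α}`: the exponent `β = 2 (1 - α)` is
exactly the one for which the powers of `δ` cancel. Where `u > δ/2`, `u^{-α} ≤ (δ/2)^{-α}`
and `v^{-β} e^{-ℓ/(2v)} ≤ (2β / (e ℓ))^β`, so that part is `O(T^{1-α} ℓ^{-β})`. Both bounds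
are independent of `t` and tend to `0` as `ℓ → ∞`.
-/

open MeasureTheory Real Set Filter Topology

theorem rpow_mul_exp_neg_le {β y : ℝ} (hβ : 0 < β) (hy : 0 ≤ y) :
    y ^ β * exp (-y) ≤ (β / exp 1) ^ β := by
  have hlin : y * exp (-(y / β)) ≤ β / exp 1 := by
    have h := add_one_le_exp (y / β - 1)
    calc y * exp (-(y / β)) = β * (y / β) * exp (-(y / β)) := by field_simp
      _ ≤ β * exp (y / β - 1) * exp (-(y / β)) := by gcongr; linarith
      _ = β / exp 1 := by
        rw [mul_assoc, ← exp_add, show y / β - 1 + -(y / β) = -1 by ring, exp_neg,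
          div_eq_mul_inv]
  calc y ^ β * exp (-y) = (y * exp (-(y / β))) ^ β := by
        rw [mul_rpow hy (exp_pos _).le, ← exp_mul]; field_simp
    _ ≤ (β / exp 1) ^ β := by gcongr

theorem rpow_neg_mul_exp_neg_div_le {β x m : ℝ} (hβ : 0 < β) (hx : 0 < x) (hm : 0 < m) :
    x ^ (-β) * exp (-(m / x)) ≤ (β / (m * exp 1)) ^ β := by
  have hmx : x ^ (-β) = (m / x) ^ β / m ^ β := by
    rw [div_rpow hm.le hx.le, rpow_neg hx.le]; field_simp
  calc x ^ (-β) * exp (-(m / x)) = (m / x) ^ β * exp (-(m / x)) / m ^ β := by rw [hmx]; ring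
    _ ≤ (β / exp 1) ^ β / m ^ β := by gcongr; exact rpow_mul_exp_neg_le hβ (by positivity)
    _ = (β / (m * exp 1)) ^ β := by rw [mul_comm m, ← div_div, div_rpow (by positivity) hm.le]

theorem tendsto_const_div_rpow_atTop_nhds_zero {a γ : ℝ} (hγ : 0 < γ) :
    Tendsto (fun x : ℝ => (a / x) ^ γ) atTop (𝓝 0) := by
  have h : Tendsto (fun x : ℝ => a / x) atTop (𝓝 0) := tendsto_const_nhds.div_atTop tendsto_id
  simpa [zero_rpow hγ.ne'] using h.rpow_const (Or.inr hγ.le)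

section Kernel

variable {α c : ℝ}

theorem integrableOn_Ioi_rpow_neg_mul_exp (hα : α < 1) (hc : 0 < c) :
    IntegrableOn (fun u : ℝ => u ^ (-α) * exp (-(c * u))) (Ioi 0) := by
  simpa using integrableOn_rpow_mul_exp_neg_mul_rpow (p := 1) (s := -α) (by linarith) one_pos hc

theorem integrableOn_Ioo_sub_rpow_neg_mul_exp (hα : α < 1) (hc : 0 < c) {t T : ℝ}
    (htT : t ≤ T) :
    IntegrableOn (fun s : ℝ => (s - t) ^ (-α) * exp (-(c * (s - t)))) (Ioo t T) := by
  have h := ((intervalIntegrable_iff_integrableOn_Ioc_of_le (sub_nonneg.2 htT)).2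
    ((integrableOn_Ioi_rpow_neg_mul_exp hα hc).mono_set Ioc_subset_Ioi_self)).comp_sub_right t
  rw [zero_add, sub_add_cancel] at h
  exact (intervalIntegrable_iff_integrableOn_Ioo_of_le htT).1 h

theorem setIntegral_Ioo_sub_rpow_neg_mul_exp_le (hα : α < 1) (hc : 0 < c) {t T : ℝ}
    (htT : t ≤ T) :
    ∫ s in Ioo t T, (s - t) ^ (-α) * exp (-(c * (s - t))) ≤
      (1 / c) ^ (1 - α) * Gamma (1 - α) := by
  rw [← integral_Ioc_eq_integral_Ioo, ← intervalIntegral.integral_of_le htT,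
    intervalIntegral.integral_comp_sub_right (fun u => u ^ (-α) * exp (-(c * u))), sub_self,
    intervalIntegral.integral_of_le (sub_nonneg.2 htT),
    ← integral_rpow_mul_exp_neg_mul_Ioi (by linarith) hc, sub_sub_cancel_left]
  refine setIntegral_mono_set (integrableOn_Ioi_rpow_neg_mul_exp hα hc) ?_
    Ioc_subset_Ioi_self.eventuallyLE
  filter_upwards [ae_restrict_mem measurableSet_Ioi] with u hu
  exact mul_nonneg (rpow_nonneg (le_of_lt hu) _) (exp_pos _).le

end Kernel

theorem rpow_neg_mul_rpow_neg_mul_exp_le {α β ℓ u v δ : ℝ} (hα : 0 ≤ α) (hβ : 0 < β)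
    (hℓ : 0 < ℓ) (hu : 0 < u) (hv : 0 < v) (huv : u + v = δ) :
    u ^ (-α) * v ^ (-β) * exp (-(ℓ * u / (v * δ))) ≤
      (δ / 2) ^ (-β) * (u ^ (-α) * exp (-(ℓ / δ ^ 2 * u))) +
        (δ / 2) ^ (-α) * (2 * β / (ℓ * exp 1)) ^ β := by
  have hδ : 0 < δ := by linarith
  rcases le_or_gt u (δ / 2) with hu2 | hu2
  · have hv_pow : v ^ (-β) ≤ (δ / 2) ^ (-β) :=
      rpow_le_rpow_of_nonpos (by positivity) (by linarith) (by linarith)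
    have hexp : ℓ / δ ^ 2 * u ≤ ℓ * u / (v * δ) := by
      rw [div_mul_eq_mul_div, sq]
      gcongr
      linarith
    calc u ^ (-α) * v ^ (-β) * exp (-(ℓ * u / (v * δ)))
        ≤ u ^ (-α) * (δ / 2) ^ (-β) * exp (-(ℓ / δ ^ 2 * u)) := by gcongr
      _ = (δ / 2) ^ (-β) * (u ^ (-α) * exp (-(ℓ / δ ^ 2 * u))) := by ring
      _ ≤ _ := le_add_of_nonneg_right (by positivity)
  · have hu_pow : u ^ (-α) ≤ (δ / 2) ^ (-α) :=
      rpow_le_rpow_of_nonpos (by positivity) hu2.le (by linarith)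
    have hexp : ℓ / 2 / v ≤ ℓ * u / (v * δ) := by
      rw [div_le_div_iff₀ hv (by positivity)]
      nlinarith [mul_pos hℓ hv]
    have hv_exp : v ^ (-β) * exp (-(ℓ * u / (v * δ))) ≤ (2 * β / (ℓ * exp 1)) ^ β :=
      calc v ^ (-β) * exp (-(ℓ * u / (v * δ))) ≤ v ^ (-β) * exp (-(ℓ / 2 / v)) := by gcongr
        _ ≤ (β / (ℓ / 2 * exp 1)) ^ β := rpow_neg_mul_exp_neg_div_le hβ hv (by positivity)
        _ = (2 * β / (ℓ * exp 1)) ^ β := by congr 1; field_simp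
    calc u ^ (-α) * v ^ (-β) * exp (-(ℓ * u / (v * δ)))
        = u ^ (-α) * (v ^ (-β) * exp (-(ℓ * u / (v * δ)))) := mul_assoc _ _ _
      _ ≤ (δ / 2) ^ (-α) * (2 * β / (ℓ * exp 1)) ^ β := by gcongr
      _ ≤ _ := le_add_of_nonneg_left (by positivity)

theorem setIntegral_Ioo_abs_rpow_mul_rpow_mul_exp_le {α β ℓ t T : ℝ} (hα0 : 0 ≤ α)
    (hα1 : α < 1) (hβ : 0 < β) (hℓ : 0 < ℓ) (htT : t < T) :
    ∫ s in Ioo t T, |t - s| ^ (-α) * (1 / (T - s)) ^ β * exp (-ℓ / (T - s)) ≤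
      exp (-ℓ / (T - t)) * (((T - t) / 2) ^ (-β) *
          ((1 / (ℓ / (T - t) ^ 2)) ^ (1 - α) * Gamma (1 - α)) +
        (T - t) * (((T - t) / 2) ^ (-α) * (2 * β / (ℓ * exp 1)) ^ β)) := by
  set δ := T - t with hδ
  set c := ℓ / δ ^ 2
  set K := (δ / 2) ^ (-α) * (2 * β / (ℓ * exp 1)) ^ β
  have hδ0 : 0 < δ := sub_pos.2 htT
  have hc : 0 < c := by positivity
  have hpt : ∀ s ∈ Ioo t T, |t - s| ^ (-α) * (1 / (T - s)) ^ β * exp (-ℓ / (T - s)) ≤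
      exp (-ℓ / δ) * ((δ / 2) ^ (-β) * ((s - t) ^ (-α) * exp (-(c * (s - t)))) + K) := by
    rintro s ⟨hts, hsT⟩
    have hTs : 0 < T - s := sub_pos.2 hsT
    have hsplit :
        exp (-ℓ / (T - s)) = exp (-ℓ / δ) * exp (-(ℓ * (s - t) / ((T - s) * δ))) := by
      rw [← exp_add]; congr 1; field_simp; ring
    rw [abs_sub_comm, abs_of_pos (sub_pos.2 hts), one_div, inv_rpow hTs.le, ← rpow_neg hTs.le,
      hsplit]
    calc (s - t) ^ (-α) * (T - s) ^ (-β) *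
          (exp (-ℓ / δ) * exp (-(ℓ * (s - t) / ((T - s) * δ))))
        = exp (-ℓ / δ) *
            ((s - t) ^ (-α) * (T - s) ^ (-β) * exp (-(ℓ * (s - t) / ((T - s) * δ)))) := by
          ring
      _ ≤ _ := by
          gcongr
          exact rpow_neg_mul_rpow_neg_mul_exp_le hα0 hβ hℓ (sub_pos.2 hts) hTs
            (by rw [hδ]; ring)
  have hF := integrableOn_Ioo_sub_rpow_neg_mul_exp hα1 hc htT.le
  have hK : IntegrableOn (fun _ => K) (Ioo t T) := integrableOn_const measure_Ioo_lt_top.ne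
  calc ∫ s in Ioo t T, |t - s| ^ (-α) * (1 / (T - s)) ^ β * exp (-ℓ / (T - s))
      ≤ ∫ s in Ioo t T,
          exp (-ℓ / δ) * ((δ / 2) ^ (-β) * ((s - t) ^ (-α) * exp (-(c * (s - t)))) + K) := by
        refine integral_mono_of_nonneg ?_ ((hF.const_mul _).add hK |>.const_mul _) ?_
        all_goals filter_upwards [ae_restrict_mem measurableSet_Ioo] with s hs
        · have : 0 < T - s := sub_pos.2 hs.2
          positivity
        · exact hpt s hs
    _ = exp (-ℓ / δ) *
          ((δ / 2) ^ (-β) * (∫ s in Ioo t T, (s - t) ^ (-α) * exp (-(c * (s - t)))) +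
            δ * K) := by
        rw [integral_const_mul, integral_add (hF.const_mul _) hK, integral_const_mul,
          setIntegral_const, volume_real_Ioo_of_le htT.le, smul_eq_mul, ← hδ]
    _ ≤ _ := by
        gcongr exp (-ℓ / δ) * ((δ / 2) ^ (-β) * ?_ + δ * K)
        exact setIntegral_Ioo_sub_rpow_neg_mul_exp_le hα1 hc htT.le

theorem setIntegral_Ioo_abs_rpow_mul_rpow_mul_exp_le_uniform {α ℓ t T : ℝ} (hα0 : 0 ≤ α)
    (hα1 : α < 1) (hℓ : 0 < ℓ) (ht : 0 ≤ t) (htT : t < T) :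
    ∫ s in Ioo t T, |t - s| ^ (-α) * (1 / (T - s)) ^ (2 * (1 - α)) * exp (-ℓ / (T - s)) ≤
      exp (-ℓ / (T - t)) * (Gamma (1 - α) * (4 / ℓ) ^ (1 - α) +
        2 ^ α * T ^ (1 - α) * (2 * (2 * (1 - α)) / exp 1 / ℓ) ^ (2 * (1 - α))) := by
  set δ := T - t with hδ
  have hδ0 : 0 < δ := sub_pos.2 htT
  have hsq :
      (δ / 2) ^ (-(2 * (1 - α))) * (1 / (ℓ / δ ^ 2)) ^ (1 - α) = (4 / ℓ) ^ (1 - α) := by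
    rw [one_div_div, rpow_neg (by positivity), rpow_mul (by positivity), rpow_two,
      ← inv_rpow (by positivity), ← mul_rpow (by positivity) (by positivity)]
    congr 1
    field_simp
    ring
  have hlin : δ * (δ / 2) ^ (-α) = 2 ^ α * δ ^ (1 - α) := by
    rw [div_rpow hδ0.le zero_le_two, rpow_neg hδ0.le, rpow_neg zero_le_two, rpow_sub hδ0,
      rpow_one]
    field_simp
  refine (setIntegral_Ioo_abs_rpow_mul_rpow_mul_exp_le hα0 hα1 (by linarith) hℓ htT).trans ?_
  rw [← mul_assoc, hsq, ← mul_assoc, hlin, mul_comm ((4 / ℓ) ^ (1 - α)), div_div,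
    mul_comm (exp 1)]
  gcongr
  linarith

theorem merle_numerical_lemma (T c₁ α : ℝ) (hT : 0 < T) (hc₁ : 0 < c₁)
    (hα : α ∈ Set.Ioo (0:ℝ) 1) :
    ∃ ℓ₀ : ℝ, ∀ ℓ ≥ ℓ₀, ∃ τ ∈ Set.Ioo 0 T, ∀ t ∈ Set.Ico τ T,
      (∫ s in Set.Ioo t T,
          |t - s| ^ (-α) * (1 / (T - s)) ^ (2 * (1 - α)) * Real.exp (-ℓ / (T - s)))
        ≤ c₁ * Real.exp (-ℓ / (T - t)) := by
  obtain ⟨hα0, hα1⟩ := hα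
  have h1α : 0 < 1 - α := by linarith
  have hlim : Tendsto (fun ℓ : ℝ => Gamma (1 - α) * (4 / ℓ) ^ (1 - α) +
      2 ^ α * T ^ (1 - α) * (2 * (2 * (1 - α)) / exp 1 / ℓ) ^ (2 * (1 - α)))
      atTop (𝓝 0) := by
    simpa using ((tendsto_const_div_rpow_atTop_nhds_zero h1α).const_mul _).add
      ((tendsto_const_div_rpow_atTop_nhds_zero (by positivity)).const_mul _)
  obtain ⟨ℓ₀, hℓ₀⟩ := eventually_atTop.1
    ((hlim.eventually (eventually_le_nhds hc₁)).and (eventually_gt_atTop 0))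
  refine ⟨ℓ₀, fun ℓ hℓ => ⟨T / 2, ⟨by linarith, by linarith⟩, fun t ht => ?_⟩⟩
  obtain ⟨hbound, hℓ⟩ := hℓ₀ ℓ hℓ
  calc _ ≤ _ := setIntegral_Ioo_abs_rpow_mul_rpow_mul_exp_le_uniform hα0.le hα1 hℓ
          (by linarith [ht.1]) ht.2
    _ ≤ exp (-ℓ / (T - t)) * c₁ := by gcongr
    _ = c₁ * exp (-ℓ / (T - t)) := mul_comm _ _
end

section
/- For α∈(0,1) and ℓ>0, the inequality ∫_{1/2}^{1} (1−w)^{−α} w^{−2(1−α)} e^{−ℓ(1−w)/(tw)} dw ≤ C t^{1−α} ∫₀^∞ r^{−α} e^{−ℓ r} dr holds for all t∈(0,1], where C depends only on α; moreover ∫₀^∞ r^{−α} e^{−ℓr} dr = Γ(1−α) ℓ^{α−1} → 0 as ℓ→∞. -/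
/-! On `(1/2, 1)` the weight `w ^ (-2(1-α))` is at most `2 ^ (2(1-α))`, and
`1 - w ≤ (1 - w) / w` lowers the exponential to `exp (-(ℓ/t)(1 - w))`. After `s = 1 - w`, extending the range to
`(0, ∞)` gives the Gamma integral `Γ(1-α) (ℓ/t)^(α-1) = t^(1-α) Γ(1-α) ℓ^(α-1)`. -/

open MeasureTheory Real Set

theorem preimage_sub_left_Ioi_zero (c : ℝ) : (fun w => c - w) ⁻¹' Ioi 0 = Iio c := by
  ext; simp

theorem integral_Iio_comp_sub_left {E : Type*} [NormedAddCommGroup E] [NormedSpace ℝ E]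
    (f : ℝ → E) (c : ℝ) :
    ∫ w in Iio c, f (c - w) = ∫ s in Ioi 0, f s := by
  rw [← preimage_sub_left_Ioi_zero]
  exact (volume.measurePreserving_sub_left c).setIntegral_preimage_emb
    (Homeomorph.subLeft c).measurableEmbedding f _

theorem integrableOn_Iio_comp_sub_left_iff {E : Type*} [NormedAddCommGroup E] {f : ℝ → E}
    (c : ℝ) :
    IntegrableOn (fun w => f (c - w)) (Iio c) ↔ IntegrableOn f (Ioi 0) := by
  rw [← preimage_sub_left_Ioi_zero]
  exact (volume.measurePreserving_sub_left c).integrableOn_comp_preimage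
    (Homeomorph.subLeft c).measurableEmbedding

section GammaIntegral

variable {α b : ℝ}

theorem integrableOn_rpow_neg_mul_exp_neg_mul_Ioi (hα : α < 1) (hb : 0 < b) :
    IntegrableOn (fun r : ℝ => r ^ (-α) * exp (-(b * r))) (Ioi 0) := by
  simpa [rpow_one] using
    integrableOn_rpow_mul_exp_neg_mul_rpow (p := 1) (s := -α) (by linarith) one_pos hb

theorem integral_rpow_neg_mul_exp_neg_mul_Ioi (hα : α < 1) (hb : 0 < b) :
    ∫ r in Ioi 0, r ^ (-α) * exp (-(b * r)) = Gamma (1 - α) * b ^ (α - 1) := by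
  have h := integral_rpow_mul_exp_neg_mul_Ioi (sub_pos.2 hα) hb
  rw [sub_sub_cancel_left] at h
  rw [h, one_div, inv_rpow hb.le, ← rpow_neg hb.le, neg_sub, mul_comm]

theorem integral_rpow_neg_mul_exp_neg_div_mul_Ioi (hα : α < 1) {ℓ t : ℝ} (hℓ : 0 < ℓ)
    (ht : 0 < t) :
    ∫ r in Ioi 0, r ^ (-α) * exp (-(ℓ / t * r))
      = t ^ (1 - α) * ∫ r in Ioi 0, r ^ (-α) * exp (-(ℓ * r)) := by
  rw [integral_rpow_neg_mul_exp_neg_mul_Ioi hα (div_pos hℓ ht),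
    integral_rpow_neg_mul_exp_neg_mul_Ioi hα hℓ, div_rpow hℓ.le ht.le, div_eq_mul_inv,
    ← rpow_neg ht.le, neg_sub]
  ring

theorem tendsto_integral_rpow_neg_mul_exp_neg_mul_Ioi (hα : α < 1) :
    Filter.Tendsto (fun ℓ : ℝ => ∫ r in Ioi 0, r ^ (-α) * exp (-(ℓ * r)))
      Filter.atTop (nhds 0) := by
  have h := (tendsto_rpow_neg_atTop (sub_pos.2 hα)).const_mul (Gamma (1 - α))
  rw [mul_zero] at h
  refine (h.congr fun ℓ => by rw [neg_sub]).congr' ?_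
  filter_upwards [Filter.eventually_gt_atTop 0] with ℓ hℓ
  exact (integral_rpow_neg_mul_exp_neg_mul_Ioi hα hℓ).symm

end GammaIntegral

theorem neg_mul_one_sub_div_le {ℓ t w : ℝ} (hℓ : 0 ≤ ℓ) (ht : 0 < t) (hw₀ : 0 < w)
    (hw₁ : w ≤ 1) :
    -(ℓ * (1 - w)) / (t * w) ≤ -(ℓ / t * (1 - w)) := by
  have key : 1 - w ≤ (1 - w) / w := le_div_self (by linarith) hw₀ hw₁
  have hrw : -(ℓ * (1 - w)) / (t * w) = -(ℓ / t * ((1 - w) / w)) := by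
    field_simp
  rw [hrw, neg_le_neg_iff]
  exact mul_le_mul_of_nonneg_left key (div_nonneg hℓ ht.le)

theorem integrand_le_of_mem_Ioo {α ℓ t w : ℝ} (hα : α ≤ 1) (hℓ : 0 ≤ ℓ) (ht : 0 < t)
    (hw : w ∈ Ioo (1/2 : ℝ) 1) :
    (1 - w) ^ (-α) * w ^ (-(2 * (1 - α))) * exp (-(ℓ * (1 - w)) / (t * w))
      ≤ (1/2 : ℝ) ^ (-(2 * (1 - α))) * ((1 - w) ^ (-α) * exp (-(ℓ / t * (1 - w)))) := by
  obtain ⟨hw₀, hw₁⟩ := hw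
  have hpow : w ^ (-(2 * (1 - α))) ≤ (1/2 : ℝ) ^ (-(2 * (1 - α))) :=
    rpow_le_rpow_of_nonpos (by norm_num) hw₀.le (by linarith)
  have hexp : exp (-(ℓ * (1 - w)) / (t * w)) ≤ exp (-(ℓ / t * (1 - w))) :=
    exp_le_exp.2 (neg_mul_one_sub_div_le hℓ ht (by linarith) hw₁.le)
  calc (1 - w) ^ (-α) * w ^ (-(2 * (1 - α))) * exp (-(ℓ * (1 - w)) / (t * w))
      ≤ (1 - w) ^ (-α) * (1/2 : ℝ) ^ (-(2 * (1 - α))) * exp (-(ℓ / t * (1 - w))) := by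
        gcongr
    _ = _ := by ring

theorem integral_Ioo_half_one_le {α ℓ t : ℝ} (hα : α < 1) (hℓ : 0 < ℓ) (ht : 0 < t) :
    (∫ w in Ioo (1/2 : ℝ) 1,
        (1 - w) ^ (-α) * w ^ (-(2 * (1 - α))) * exp (-(ℓ * (1 - w)) / (t * w)))
      ≤ (1/2 : ℝ) ^ (-(2 * (1 - α))) * t ^ (1 - α)
          * ∫ r in Ioi 0, r ^ (-α) * exp (-(ℓ * r)) := by
  set g : ℝ → ℝ := fun s => s ^ (-α) * exp (-(ℓ / t * s))
  have hg : IntegrableOn g (Ioi 0) :=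
    integrableOn_rpow_neg_mul_exp_neg_mul_Ioi hα (div_pos hℓ ht)
  have hg' : IntegrableOn (fun w => g (1 - w)) (Iio 1) :=
    (integrableOn_Iio_comp_sub_left_iff 1).2 hg
  have hg'_nonneg : 0 ≤ᵐ[volume.restrict (Iio 1)] fun w => g (1 - w) := by
    filter_upwards [ae_restrict_mem measurableSet_Iio] with w hw
    exact mul_nonneg (rpow_nonneg (by linarith [mem_Iio.1 hw]) _) (exp_pos _).le
  calc _ ≤ ∫ w in Ioo (1/2 : ℝ) 1, (1/2 : ℝ) ^ (-(2 * (1 - α))) * g (1 - w) := by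
        refine integral_mono_of_nonneg ?_ ((hg'.mono_set Ioo_subset_Iio_self).const_mul _) ?_
        all_goals filter_upwards [ae_restrict_mem measurableSet_Ioo] with w hw
        · exact mul_nonneg (mul_nonneg (rpow_nonneg (by linarith [hw.2]) _)
            (rpow_nonneg (by linarith [hw.1]) _)) (exp_pos _).le
        · exact integrand_le_of_mem_Ioo hα.le hℓ.le ht hw
    _ = (1/2 : ℝ) ^ (-(2 * (1 - α))) * ∫ w in Ioo (1/2 : ℝ) 1, g (1 - w) :=
        integral_const_mul _ _
    _ ≤ (1/2 : ℝ) ^ (-(2 * (1 - α))) * ∫ w in Iio 1, g (1 - w) := by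
        refine mul_le_mul_of_nonneg_left ?_ (by positivity)
        exact setIntegral_mono_set hg' hg'_nonneg Ioo_subset_Iio_self.eventuallyLE
    _ = _ := by
        rw [integral_Iio_comp_sub_left g 1, integral_rpow_neg_mul_exp_neg_div_mul_Ioi hα hℓ ht,
          mul_assoc]

theorem integral_estimate_half_one (α : ℝ) (hα : α ∈ Set.Ioo (0:ℝ) 1) :
    (∃ C > 0, ∀ ℓ > (0:ℝ), ∀ t ∈ Set.Ioc (0:ℝ) 1,
      (∫ w in Set.Ioo (1/2:ℝ) 1,
          (1 - w) ^ (-α) * w ^ (-(2 * (1 - α))) * Real.exp (-(ℓ * (1 - w)) / (t * w)))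
        ≤ C * t ^ (1 - α) * ∫ r in Set.Ioi (0:ℝ), r ^ (-α) * Real.exp (-(ℓ * r))) ∧
    (∀ ℓ > (0:ℝ),
      (∫ r in Set.Ioi (0:ℝ), r ^ (-α) * Real.exp (-(ℓ * r)))
        = Real.Gamma (1 - α) * ℓ ^ (α - 1)) ∧
    Filter.Tendsto (fun ℓ : ℝ => ∫ r in Set.Ioi (0:ℝ), r ^ (-α) * Real.exp (-(ℓ * r)))
      Filter.atTop (nhds 0) :=
  ⟨⟨(1/2 : ℝ) ^ (-(2 * (1 - α))), by positivity,
      fun _ hℓ _ ht => integral_Ioo_half_one_le hα.2 hℓ ht.1⟩,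
    fun _ hℓ => integral_rpow_neg_mul_exp_neg_mul_Ioi hα.2 hℓ,
    tendsto_integral_rpow_neg_mul_exp_neg_mul_Ioi hα.2⟩
end

section
/- With Q_T as above and assuming the exponential decay |Q_{k(0)}(x)| ≤ C e^{−θ|x|} for some C,θ>0, for every R>0 and t<T with T−t ≤ 1, ∫_{|x|≥R} |x|^{−b} |Q_T(x,t)|^{σ_b} dx ≲ R^{−2} e^{−θ'R/(T−t)} for some θ'>0 depending only on θ, σ_b, N, b. -/
/-!
Writing `ε = T - t`, the phase of `Q_T` has modulus one, so the decay of `Q` gives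
`|x|^{-b} |Q_T(x,t)|^σ ≤ C^σ ε^{-Nσ/2} |x|^{-b} e^{-θσ|x|/ε}`. On `|x| ≥ R` half of the
exponential is at most `e^{-θσR/(2ε)}`, and the scaling `x = εy` turns the integral of the other
half into `ε^{N-b}` times a finite constant. Since `Nσ/2 = N - b + 2` we are left with
`ε^{-2} e^{-θσR/(2ε)}`, and `s^2 e^{-s} ≤ 2` trades one quarter of the exponent for `R^{-2}`.
-/

open MeasureTheory

/-- The pseudo-conformal blow-up profile `Q_T(x,t)`. -/
noncomputable def QT {N : ℕ} (T : ℝ) (Q : EuclideanSpace ℝ (Fin N) → ℝ) (t : ℝ)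
    (x : EuclideanSpace ℝ (Fin N)) : ℂ :=
  (((T - t) ^ (-(N : ℝ) / 2) : ℝ) : ℂ) *
    Complex.exp (Complex.I * (((1 / (T - t) - ‖x‖ ^ 2 / (4 * (T - t))) : ℝ) : ℂ)) *
    ((Q ((T - t)⁻¹ • x) : ℝ) : ℂ)

open Real Set

theorem Real.inv_sq_mul_exp_neg_div_le {ε a : ℝ} (hε : 0 < ε) (ha : 0 < a) :
    (ε ^ 2)⁻¹ * exp (-(a / ε)) ≤ 2 / a ^ 2 := by
  have h := pow_div_factorial_le_exp (a / ε) (div_pos ha hε).le 2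
  rw [Nat.factorial_two, Nat.cast_two, div_pow, div_div, div_le_iff₀ (by positivity)] at h
  rw [exp_neg, ← mul_inv, inv_eq_one_div, div_le_div_iff₀ (by positivity) (by positivity)]
  linarith

theorem Real.inv_sq_mul_exp_neg_div_two_le {ε c R : ℝ} (hε : 0 < ε) (hc : 0 < c) (hR : 0 < R) :
    (ε ^ 2)⁻¹ * exp (-(c * R / (2 * ε))) ≤ 32 / c ^ 2 * R ^ (-(2 : ℝ)) * exp (-(c / 4) * R / ε) := by
  have hsplit : exp (-(c * R / (2 * ε))) = exp (-(c * R / 4 / ε)) * exp (-(c / 4) * R / ε) := by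
    rw [← exp_add]
    ring_nf
  have hconst : 2 / (c * R / 4) ^ 2 = 32 / c ^ 2 * R ^ (-(2 : ℝ)) := by
    rw [rpow_neg hR.le, rpow_two]
    field_simp
    ring
  rw [hsplit, ← mul_assoc, ← hconst]
  gcongr
  exact inv_sq_mul_exp_neg_div_le hε (by positivity)

section RadialExponential

variable {E : Type*} [NormedAddCommGroup E] [NormedSpace ℝ E] [FiniteDimensional ℝ E]
  [MeasurableSpace E] [BorelSpace E] (μ : Measure E) [μ.IsAddHaarMeasure]

theorem integrable_norm_rpow_mul_exp_neg_mul_norm [Nontrivial E] {b c : ℝ}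
    (hb : b < Module.finrank ℝ E) (hc : 0 < c) :
    Integrable (fun x : E => ‖x‖ ^ (-b) * exp (-c * ‖x‖)) μ := by
  have hd : 1 ≤ Module.finrank ℝ E := Module.finrank_pos
  rw [integrable_fun_norm_addHaar μ (f := fun r => r ^ (-b) * exp (-c * r))]
  refine (integrableOn_rpow_mul_exp_neg_mul_rpow (p := 1)
    (s := Module.finrank ℝ E - 1 - b) (by linarith) one_pos hc).congr_fun
    (fun r (hr : 0 < r) => ?_) measurableSet_Ioi
  have hexp : (Module.finrank ℝ E : ℝ) - 1 - b = ((Module.finrank ℝ E - 1 : ℕ) : ℝ) + -b := by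
    push_cast [Nat.cast_sub hd]
    ring
  beta_reduce
  rw [hexp, rpow_add hr, rpow_natCast, rpow_one, smul_eq_mul]
  ring

theorem integral_norm_rpow_mul_exp_neg_div_mul_norm {b c ε : ℝ} (hε : 0 < ε) :
    ∫ x, ‖x‖ ^ (-b) * exp (-(c / ε) * ‖x‖) ∂μ =
      ε ^ ((Module.finrank ℝ E : ℝ) - b) * ∫ x, ‖x‖ ^ (-b) * exp (-c * ‖x‖) ∂μ := by
  have hscale : ∀ x : E, ‖x‖ ^ (-b) * exp (-(c / ε) * ‖x‖) =
      ε ^ (-b) * (‖ε⁻¹ • x‖ ^ (-b) * exp (-c * ‖ε⁻¹ • x‖)) := fun x => by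
    rw [norm_smul, norm_inv, norm_of_nonneg hε.le, mul_rpow (by positivity) (norm_nonneg x),
      inv_rpow hε.le, mul_assoc, mul_inv_cancel_left₀ (rpow_pos_of_pos hε _).ne']
    ring_nf
  simp_rw [hscale]
  rw [integral_const_mul, Measure.integral_comp_inv_smul_of_nonneg μ
      (fun y => ‖y‖ ^ (-b) * exp (-c * ‖y‖)) hε.le, smul_eq_mul, ← mul_assoc, ← rpow_natCast,
    ← rpow_add hε, neg_add_eq_sub]

theorem setIntegral_norm_ge_norm_rpow_mul_exp_le [Nontrivial E] {b a : ℝ}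
    (hb : b < Module.finrank ℝ E) (ha : 0 < a) (R : ℝ) :
    ∫ x in {x : E | R ≤ ‖x‖}, ‖x‖ ^ (-b) * exp (-a * ‖x‖) ∂μ ≤
      exp (-(a * R / 2)) * ∫ x, ‖x‖ ^ (-b) * exp (-(a / 2) * ‖x‖) ∂μ := by
  have hint := integrable_norm_rpow_mul_exp_neg_mul_norm μ hb (half_pos ha)
  have hS : MeasurableSet {x : E | R ≤ ‖x‖} := measurableSet_le measurable_const measurable_norm
  calc ∫ x in {x : E | R ≤ ‖x‖}, ‖x‖ ^ (-b) * exp (-a * ‖x‖) ∂μ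
      ≤ ∫ x in {x : E | R ≤ ‖x‖}, exp (-(a * R / 2)) * (‖x‖ ^ (-b) * exp (-(a / 2) * ‖x‖)) ∂μ := by
        refine setIntegral_mono_on (integrable_norm_rpow_mul_exp_neg_mul_norm μ hb ha).integrableOn
          (hint.const_mul _).integrableOn hS fun x (hx : R ≤ ‖x‖) => ?_
        have hsplit : exp (-a * ‖x‖) = exp (-(a * ‖x‖ / 2)) * exp (-(a / 2) * ‖x‖) := by
          rw [← exp_add]
          ring_nf
        rw [hsplit, mul_left_comm]
        gcongr
    _ = exp (-(a * R / 2)) * ∫ x in {x : E | R ≤ ‖x‖}, ‖x‖ ^ (-b) * exp (-(a / 2) * ‖x‖) ∂μ :=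
        integral_const_mul _ _
    _ ≤ exp (-(a * R / 2)) * ∫ x, ‖x‖ ^ (-b) * exp (-(a / 2) * ‖x‖) ∂μ :=
        mul_le_mul_of_nonneg_left
          (setIntegral_le_integral hint (ae_of_all _ fun x => by positivity)) (exp_pos _).le

theorem setIntegral_norm_ge_norm_rpow_mul_exp_div_le [Nontrivial E] {b c ε : ℝ}
    (hb : b < Module.finrank ℝ E) (hc : 0 < c) (hε : 0 < ε) (R : ℝ) :
    ∫ x in {x : E | R ≤ ‖x‖}, ‖x‖ ^ (-b) * exp (-(c / ε) * ‖x‖) ∂μ ≤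
      ε ^ ((Module.finrank ℝ E : ℝ) - b) * exp (-(c * R / (2 * ε))) *
        ∫ x, ‖x‖ ^ (-b) * exp (-(c / 2) * ‖x‖) ∂μ := by
  have htail := setIntegral_norm_ge_norm_rpow_mul_exp_le μ hb (div_pos hc hε) R
  rwa [div_right_comm c ε 2, integral_norm_rpow_mul_exp_neg_div_mul_norm μ hε, mul_left_comm,
    div_mul_eq_mul_div, div_div, mul_comm ε, ← mul_assoc] at htail

end RadialExponential

theorem norm_QT {N : ℕ} {T t : ℝ} (Q : EuclideanSpace ℝ (Fin N) → ℝ) (ht : t ≤ T)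
    (x : EuclideanSpace ℝ (Fin N)) :
    ‖QT T Q t x‖ = (T - t) ^ (-(N : ℝ) / 2) * |Q ((T - t)⁻¹ • x)| := by
  rw [QT, norm_mul, norm_mul, Complex.norm_real, Complex.norm_real, Complex.norm_exp,
    Complex.re_mul_ofReal, Complex.I_re, zero_mul, exp_zero, mul_one, norm_of_nonneg
      (rpow_nonneg (sub_nonneg.2 ht) _), Real.norm_eq_abs]

theorem norm_QT_rpow_le {N : ℕ} {T t Cd θ σ : ℝ} {Q : EuclideanSpace ℝ (Fin N) → ℝ}
    (ht : t < T) (hCd : 0 ≤ Cd) (hσ : 0 ≤ σ)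
    (hdecay : ∀ x, |Q x| ≤ Cd * exp (-θ * ‖x‖)) (x : EuclideanSpace ℝ (Fin N)) :
    ‖QT T Q t x‖ ^ σ ≤ Cd ^ σ * (T - t) ^ (-(N : ℝ) * σ / 2) * exp (-(θ * σ / (T - t)) * ‖x‖) := by
  have hε : 0 < T - t := sub_pos.2 ht
  calc ‖QT T Q t x‖ ^ σ
      ≤ ((T - t) ^ (-(N : ℝ) / 2) * (Cd * exp (-θ * ‖(T - t)⁻¹ • x‖))) ^ σ := by
        rw [norm_QT Q ht.le]
        gcongr
        exact hdecay _
    _ = Cd ^ σ * (T - t) ^ (-(N : ℝ) * σ / 2) * exp (-(θ * σ / (T - t)) * ‖x‖) := by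
        rw [mul_rpow (by positivity) (by positivity), mul_rpow hCd (exp_pos _).le,
          ← rpow_mul hε.le, ← exp_mul, norm_smul, norm_inv, norm_of_nonneg hε.le]
        ring_nf

theorem setIntegral_norm_rpow_mul_norm_QT_rpow_le {N : ℕ} [NeZero N] {T t Cd θ σ b : ℝ}
    {Q : EuclideanSpace ℝ (Fin N) → ℝ} (hbN : b < N) (ht : t < T) (hCd : 0 ≤ Cd) (hθ : 0 < θ)
    (hσ : 0 < σ) (hdecay : ∀ x, |Q x| ≤ Cd * exp (-θ * ‖x‖))
    {s : Set (EuclideanSpace ℝ (Fin N))} (hs : MeasurableSet s) :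
    ∫ x in s, ‖x‖ ^ (-b) * ‖QT T Q t x‖ ^ σ ≤
      Cd ^ σ * (T - t) ^ (-(N : ℝ) * σ / 2) *
        ∫ x in s, ‖x‖ ^ (-b) * exp (-(θ * σ / (T - t)) * ‖x‖) := by
  have hint := integrable_norm_rpow_mul_exp_neg_mul_norm volume
    (by rwa [finrank_euclideanSpace_fin]) (div_pos (mul_pos hθ hσ) (sub_pos.2 ht))
  rw [← integral_const_mul]
  refine integral_mono_of_nonneg (ae_of_all _ fun x => by positivity)
    (hint.const_mul _).integrableOn (ae_restrict_of_forall_mem hs fun x _ => ?_)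
  beta_reduce
  rw [mul_left_comm]
  gcongr
  exact norm_QT_rpow_le ht hCd hσ.le hdecay x

theorem setIntegral_norm_ge_norm_rpow_mul_norm_QT_rpow_le {N : ℕ} [NeZero N]
    {T t Cd θ σ b : ℝ} {Q : EuclideanSpace ℝ (Fin N) → ℝ} (hbN : b < N)
    (hσ : σ = (4 - 2 * b) / N + 2) (hσpos : 0 < σ) (ht : t < T) (hCd : 0 ≤ Cd) (hθ : 0 < θ)
    (hdecay : ∀ x, |Q x| ≤ Cd * exp (-θ * ‖x‖)) (R : ℝ) :
    ∫ x in {x : EuclideanSpace ℝ (Fin N) | R ≤ ‖x‖}, ‖x‖ ^ (-b) * ‖QT T Q t x‖ ^ σ ≤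
      Cd ^ σ * (∫ y : EuclideanSpace ℝ (Fin N), ‖y‖ ^ (-b) * exp (-(θ * σ / 2) * ‖y‖)) *
        (((T - t) ^ 2)⁻¹ * exp (-(θ * σ * R / (2 * (T - t))))) := by
  have hε : 0 < T - t := sub_pos.2 ht
  have hN : (N : ℝ) ≠ 0 := NeZero.ne _
  have hexp : -(N : ℝ) * σ / 2 + (N - b) = -2 := by
    rw [hσ]
    field_simp
    ring
  have hpow : (T - t) ^ (-(N : ℝ) * σ / 2) * (T - t) ^ ((N : ℝ) - b) = ((T - t) ^ 2)⁻¹ := by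
    rw [← rpow_add hε, hexp, rpow_neg hε.le, rpow_two]
  calc ∫ x in {x : EuclideanSpace ℝ (Fin N) | R ≤ ‖x‖}, ‖x‖ ^ (-b) * ‖QT T Q t x‖ ^ σ
      ≤ Cd ^ σ * (T - t) ^ (-(N : ℝ) * σ / 2) * ∫ x in {x : EuclideanSpace ℝ (Fin N) | R ≤ ‖x‖},
          ‖x‖ ^ (-b) * exp (-(θ * σ / (T - t)) * ‖x‖) :=
        setIntegral_norm_rpow_mul_norm_QT_rpow_le hbN ht hCd hθ hσpos hdecay
          (measurableSet_le measurable_const measurable_norm)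
    _ ≤ Cd ^ σ * (T - t) ^ (-(N : ℝ) * σ / 2) * ((T - t) ^ ((N : ℝ) - b) *
          exp (-(θ * σ * R / (2 * (T - t)))) *
            ∫ y : EuclideanSpace ℝ (Fin N), ‖y‖ ^ (-b) * exp (-(θ * σ / 2) * ‖y‖)) := by
        gcongr
        simpa only [finrank_euclideanSpace_fin] using
          setIntegral_norm_ge_norm_rpow_mul_exp_div_le (volume : Measure (EuclideanSpace ℝ (Fin N)))
            (by rwa [finrank_euclideanSpace_fin]) (mul_pos hθ hσpos) hε R
    _ = _ := by
        rw [← hpow]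
        ring

theorem QT_exterior_decay_general (N : ℕ) (b σb : ℝ)
    (hb : 0 < b ∧ b < min 2 N) (hσ : σb = (4 - 2 * b) / N + 2)
    (Q : EuclideanSpace ℝ (Fin N) → ℝ) (T : ℝ)
    (Cd θ : ℝ) (hCd : 0 < Cd) (hθ : 0 < θ)
    (hdecay : ∀ x : EuclideanSpace ℝ (Fin N), |Q x| ≤ Cd * Real.exp (-θ * ‖x‖)) :
    ∃ C > 0, ∃ θ' > 0, ∀ R > (0:ℝ), ∀ t < T, T - t ≤ 1 →
      (∫ x in {x : EuclideanSpace ℝ (Fin N) | R ≤ ‖x‖}, ‖x‖ ^ (-b) * ‖QT T Q t x‖ ^ σb)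
        ≤ C * R ^ (-(2:ℝ)) * Real.exp (-θ' * R / (T - t)) := by
  obtain ⟨hb2, hbN⟩ : b < 2 ∧ b < N := by simpa using hb.2
  have : NeZero N := ⟨by exact_mod_cast (hb.1.trans hbN).ne'⟩
  have hσpos : 0 < σb := by
    rw [hσ]
    have : 0 < 4 - 2 * b := by linarith
    positivity
  set c := θ * σb
  have hc : 0 < c := mul_pos hθ hσpos
  set I₀ := ∫ y : EuclideanSpace ℝ (Fin N), ‖y‖ ^ (-b) * exp (-(c / 2) * ‖y‖)
  have hI₀ : 0 ≤ I₀ := integral_nonneg fun y => by positivity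
  refine ⟨Cd ^ σb * (I₀ + 1) * (32 / c ^ 2), by positivity, c / 4, by positivity,
    fun R hR t ht _ => ?_⟩
  calc (∫ x in {x : EuclideanSpace ℝ (Fin N) | R ≤ ‖x‖}, ‖x‖ ^ (-b) * ‖QT T Q t x‖ ^ σb)
      ≤ Cd ^ σb * I₀ * (((T - t) ^ 2)⁻¹ * exp (-(c * R / (2 * (T - t))))) :=
        setIntegral_norm_ge_norm_rpow_mul_norm_QT_rpow_le hbN hσ hσpos ht hCd.le hθ hdecay R
    _ ≤ Cd ^ σb * (I₀ + 1) * (32 / c ^ 2 * R ^ (-(2 : ℝ)) * exp (-(c / 4) * R / (T - t))) := by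
        gcongr Cd ^ σb * ?_ * ?_
        · linarith
        · exact inv_sq_mul_exp_neg_div_two_le (sub_pos.2 ht) hc hR
    _ = Cd ^ σb * (I₀ + 1) * (32 / c ^ 2) * R ^ (-(2 : ℝ)) * exp (-(c / 4) * R / (T - t)) := by
        ring

theorem QT_exterior_decay (N : ℕ) (hN : 1 ≤ N) (b σb : ℝ)
    (hb : 0 < b ∧ b < min 2 N) (hσ : σb = (4 - 2 * b) / N + 2)
    (Q : EuclideanSpace ℝ (Fin N) → ℝ) (T : ℝ) (hT : 0 < T)
    (Cd θ : ℝ) (hCd : 0 < Cd) (hθ : 0 < θ)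
    (hdecay : ∀ x : EuclideanSpace ℝ (Fin N), |Q x| ≤ Cd * Real.exp (-θ * ‖x‖)) :
    ∃ C > 0, ∃ θ' > 0, ∀ R > (0:ℝ), ∀ t < T, T - t ≤ 1 →
      (∫ x in {x : EuclideanSpace ℝ (Fin N) | R ≤ ‖x‖}, ‖x‖ ^ (-b) * ‖QT T Q t x‖ ^ σb)
        ≤ C * R ^ (-(2:ℝ)) * Real.exp (-θ' * R / (T - t)) :=
  QT_exterior_decay_general N b σb hb hσ Q T Cd θ hCd hθ hdecay
end
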